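/- arXiv:2010.04094 — 4 statements merged into one kernel-verified Lean document; each statement's English description precedes it below -/
import Mathlib

section
/- Let u_1,…,u_m be real numbers, not all zero, with I₊ = {i : u_i > 0} and I₋ = {i : u_i < 0}. Then u_1 ⊻⁻ ⋯ ⊻⁻ u_m equals max_{i∈I₊} u_i if I₋ = ∅ or max_{i∈I₋}|u_i| < max_{i∈I₊} u_i; it equals min_{i∈I₋} u_i if I₊ = ∅ or max_{i∈I₊} u_i < max_{i∈I₋}|u_i|; and it equals min_{i∈I₋} u_i if both sets are nonempty and max_{i∈I₋}|u_i| = max_{i∈I₊} u_i. -/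
open scoped Classical

/-- lower regularized idempotent addition -/
noncomputable def smm (u v : ℝ) : ℝ :=
  if |v| < |u| then u else if |u| < |v| then v else min u v

/-- upper regularized idempotent addition -/
noncomputable def smp (u v : ℝ) : ℝ :=
  if |v| < |u| then u else if |u| < |v| then v else max u v

/-- limit idempotent addition ⊞ -/
noncomputable def bp (u v : ℝ) : ℝ :=
  if |v| < |u| then u else if |u| < |v| then v else (u + v) / 2

/-!
`smm` is the maximum for the linear order on `ℝ` that compares absolute values first and breaks
ties in favour of the negative number, i.e. the order pulled back along `x ↦ toLex (|x|, -x)`.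
In this order `0` is the least element, so `u₁ ⊻⁻ ⋯ ⊻⁻ uₘ ⊻⁻ 0` is the largest `uᵢ`. When the
positive entries dominate in absolute value this is their maximum; otherwise it is the negative
entry of largest absolute value, i.e. the minimum of the negative entries.
-/

noncomputable def smmKey (x : ℝ) : ℝ ×ₗ ℝ := toLex (|x|, -x)

lemma smmKey_le_iff {x y : ℝ} : smmKey x ≤ smmKey y ↔ |x| < |y| ∨ |x| = |y| ∧ y ≤ x := by
  simp [smmKey, Prod.Lex.toLex_le_toLex]

lemma smmKey_zero_le (x : ℝ) : smmKey 0 ≤ smmKey x := by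
  rcases eq_or_ne x 0 with rfl | hx
  · exact le_rfl
  · exact smmKey_le_iff.2 (.inl (by simpa using hx))

lemma smmKey_le_of_abs_lt {x y : ℝ} (h : |x| < |y|) : smmKey x ≤ smmKey y :=
  smmKey_le_iff.2 (.inl h)

lemma smmKey_le_of_nonneg_of_le {x y : ℝ} (hx : 0 ≤ x) (h : x ≤ y) : smmKey x ≤ smmKey y := by
  rcases h.lt_or_eq with h | rfl
  · exact smmKey_le_of_abs_lt (by rwa [abs_of_nonneg hx, abs_of_nonneg (hx.trans h.le)])
  · exact le_rfl

lemma smmKey_le_of_abs_le_of_nonpos {x y : ℝ} (hy : y ≤ 0) (h : |x| ≤ |y|) :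
    smmKey x ≤ smmKey y := by
  rcases h.lt_or_eq with h | h
  · exact smmKey_le_of_abs_lt h
  · refine smmKey_le_iff.2 (.inr ⟨h, ?_⟩)
    calc y = -|y| := by rw [abs_of_nonpos hy, neg_neg]
      _ = -|x| := by rw [h]
      _ ≤ x := neg_abs_le x

lemma smm_eq_left {u v : ℝ} (h : smmKey v ≤ smmKey u) : smm u v = u := by
  rcases smmKey_le_iff.1 h with h | ⟨h, hle⟩
  · simp [smm, h]
  · simp [smm, h, hle]

lemma smm_eq_right {u v : ℝ} (h : smmKey u ≤ smmKey v) : smm u v = v := by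
  rcases smmKey_le_iff.1 h with h | ⟨h, hle⟩
  · simp [smm, h, h.not_gt]
  · simp [smm, h, hle]

lemma smm_eq_or (u v : ℝ) : smm u v = u ∨ smm u v = v := by
  rcases le_total (smmKey v) (smmKey u) with h | h
  · exact .inl (smm_eq_left h)
  · exact .inr (smm_eq_right h)

lemma foldr_smm_eq_zero_or_mem (l : List ℝ) : l.foldr smm 0 = 0 ∨ l.foldr smm 0 ∈ l := by
  induction l with
  | nil => exact .inl rfl
  | cons a t ih =>
    rcases smm_eq_or a (t.foldr smm 0) with h | h <;> rw [List.foldr_cons, h]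
    · exact .inr List.mem_cons_self
    · exact ih.imp_right (List.mem_cons_of_mem a)

lemma foldr_smm_eq_of_forall_smmKey_le {l : List ℝ} {r : ℝ} (hr : r = 0 ∨ r ∈ l)
    (h : ∀ x ∈ l, smmKey x ≤ smmKey r) : l.foldr smm 0 = r := by
  induction l with
  | nil => simpa [eq_comm] using hr
  | cons a t ih =>
    have hr : r = a ∨ r = 0 ∨ r ∈ t := by
      rcases hr with hr | hr
      · exact .inr (.inl hr)
      · exact (List.mem_cons.1 hr).imp_right .inr
    rw [List.foldr_cons]
    rcases hr with rfl | hr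
    · refine smm_eq_left ?_
      rcases foldr_smm_eq_zero_or_mem t with hs | hs
      · rw [hs]; exact smmKey_zero_le r
      · exact h _ (List.mem_cons_of_mem r hs)
    · rw [ih hr fun x hx => h x (List.mem_cons_of_mem a hx)]
      exact smm_eq_right (h a List.mem_cons_self)

lemma foldr_smm_ofFn_eq {m : ℕ} (u : Fin m → ℝ) (j : Fin m)
    (h : ∀ i, smmKey (u i) ≤ smmKey (u j)) : (List.ofFn u).foldr smm 0 = u j :=
  foldr_smm_eq_of_forall_smmKey_le (.inr (List.mem_ofFn.2 ⟨j, rfl⟩)) fun _ hx => by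
    obtain ⟨i, rfl⟩ := List.mem_ofFn.1 hx
    exact h i

lemma foldr_smm_ofFn_eq_sup'_of_pos {m : ℕ} (u : Fin m → ℝ)
    (hp : (Finset.univ.filter fun i => 0 < u i).Nonempty)
    (h : ∀ i, u i < 0 → |u i| < (Finset.univ.filter fun i => 0 < u i).sup' hp u) :
    (List.ofFn u).foldr smm 0 = (Finset.univ.filter fun i => 0 < u i).sup' hp u := by
  obtain ⟨j, hj, hjmax⟩ := Finset.exists_mem_eq_sup' hp u
  have hj0 : 0 < u j := (Finset.mem_filter_univ j).1 hj
  rw [hjmax] at h ⊢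
  refine foldr_smm_ofFn_eq u j fun i => ?_
  rcases lt_trichotomy (u i) 0 with hi | hi | hi
  · exact smmKey_le_of_abs_lt (by rw [abs_of_pos hj0]; exact h i hi)
  · rw [hi]; exact smmKey_zero_le (u j)
  · exact smmKey_le_of_nonneg_of_le hi.le
      (hjmax ▸ Finset.le_sup' u ((Finset.mem_filter_univ i).2 hi))

lemma foldr_smm_ofFn_eq_inf'_of_neg {m : ℕ} (u : Fin m → ℝ)
    (hm : (Finset.univ.filter fun i => u i < 0).Nonempty)
    (h : ∀ i, 0 < u i → u i ≤ (Finset.univ.filter fun i => u i < 0).sup' hm (fun i => |u i|)) :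
    (List.ofFn u).foldr smm 0 = (Finset.univ.filter fun i => u i < 0).inf' hm u := by
  obtain ⟨j, hj, hjmax⟩ := Finset.exists_mem_eq_sup' hm (fun i => |u i|)
  have hj0 : u j < 0 := (Finset.mem_filter_univ j).1 hj
  have habs : ∀ i, |u i| ≤ |u j| := fun i => by
    rcases lt_trichotomy (u i) 0 with hi | hi | hi
    · exact hjmax ▸ Finset.le_sup' (fun i => |u i|) ((Finset.mem_filter_univ i).2 hi)
    · simp [hi]
    · rw [abs_of_pos hi, ← hjmax]; exact h i hi
  rw [foldr_smm_ofFn_eq u j fun i => smmKey_le_of_abs_le_of_nonpos hj0.le (habs i)]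
  refine le_antisymm (Finset.le_inf' _ _ fun i hi => ?_) (Finset.inf'_le u hj)
  have hi0 : u i < 0 := (Finset.mem_filter_univ i).1 hi
  linarith [habs i, abs_of_neg hi0, abs_of_neg hj0]

theorem stmt_5_general {m : ℕ} (u : Fin m → ℝ) :
    (∀ hp : (Finset.univ.filter fun i => 0 < u i).Nonempty,
      ((Finset.univ.filter fun i => u i < 0) = ∅ ∨
        ∀ hm : (Finset.univ.filter fun i => u i < 0).Nonempty,
          (Finset.univ.filter fun i => u i < 0).sup' hm (fun i => |u i|) <
            (Finset.univ.filter fun i => 0 < u i).sup' hp u) →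
      (List.ofFn u).foldr smm 0 = (Finset.univ.filter fun i => 0 < u i).sup' hp u) ∧
    (∀ hm : (Finset.univ.filter fun i => u i < 0).Nonempty,
      ((Finset.univ.filter fun i => 0 < u i) = ∅ ∨
        ∀ hp : (Finset.univ.filter fun i => 0 < u i).Nonempty,
          (Finset.univ.filter fun i => 0 < u i).sup' hp u <
            (Finset.univ.filter fun i => u i < 0).sup' hm (fun i => |u i|)) →
      (List.ofFn u).foldr smm 0 = (Finset.univ.filter fun i => u i < 0).inf' hm u) ∧
    (∀ hp : (Finset.univ.filter fun i => 0 < u i).Nonempty,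
      ∀ hm : (Finset.univ.filter fun i => u i < 0).Nonempty,
        (Finset.univ.filter fun i => u i < 0).sup' hm (fun i => |u i|) =
          (Finset.univ.filter fun i => 0 < u i).sup' hp u →
        (List.ofFn u).foldr smm 0 = (Finset.univ.filter fun i => u i < 0).inf' hm u) := by
  refine ⟨fun hp h => ?_, fun hm h => ?_, fun hp hm heq => ?_⟩
  · refine foldr_smm_ofFn_eq_sup'_of_pos u hp fun i hi => ?_
    have hi : i ∈ Finset.univ.filter fun i => u i < 0 := (Finset.mem_filter_univ i).2 hi
    have hlt := h.resolve_left (Finset.ne_empty_of_mem hi) ⟨i, hi⟩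
    exact (Finset.le_sup' (fun i => |u i|) hi).trans_lt hlt
  · refine foldr_smm_ofFn_eq_inf'_of_neg u hm fun i hi => ?_
    have hi : i ∈ Finset.univ.filter fun i => 0 < u i := (Finset.mem_filter_univ i).2 hi
    have hlt := h.resolve_left (Finset.ne_empty_of_mem hi) ⟨i, hi⟩
    exact (Finset.le_sup' u hi).trans hlt.le
  · refine foldr_smm_ofFn_eq_inf'_of_neg u hm fun i hi => ?_
    exact heq ▸ Finset.le_sup' u ((Finset.mem_filter_univ i).2 hi)

theorem stmt_5 {m : ℕ} (u : Fin m → ℝ) (hu : ∃ i, u i ≠ 0) :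
    (∀ hp : (Finset.univ.filter fun i => 0 < u i).Nonempty,
      ((Finset.univ.filter fun i => u i < 0) = ∅ ∨
        ∀ hm : (Finset.univ.filter fun i => u i < 0).Nonempty,
          (Finset.univ.filter fun i => u i < 0).sup' hm (fun i => |u i|) <
            (Finset.univ.filter fun i => 0 < u i).sup' hp u) →
      (List.ofFn u).foldr smm 0 = (Finset.univ.filter fun i => 0 < u i).sup' hp u) ∧
    (∀ hm : (Finset.univ.filter fun i => u i < 0).Nonempty,
      ((Finset.univ.filter fun i => 0 < u i) = ∅ ∨
        ∀ hp : (Finset.univ.filter fun i => 0 < u i).Nonempty,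
          (Finset.univ.filter fun i => 0 < u i).sup' hp u <
            (Finset.univ.filter fun i => u i < 0).sup' hm (fun i => |u i|)) →
      (List.ofFn u).foldr smm 0 = (Finset.univ.filter fun i => u i < 0).inf' hm u) ∧
    (∀ hp : (Finset.univ.filter fun i => 0 < u i).Nonempty,
      ∀ hm : (Finset.univ.filter fun i => u i < 0).Nonempty,
        (Finset.univ.filter fun i => u i < 0).sup' hm (fun i => |u i|) =
          (Finset.univ.filter fun i => 0 < u i).sup' hp u →
        (List.ofFn u).foldr smm 0 = (Finset.univ.filter fun i => u i < 0).inf' hm u) :=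
  stmt_5_general u
end

section
/- For every x ∈ ℝ^n and every α ∈ ℝ, α · (⊞_{i∈I} x_i) = ⊞_{i∈I} (α x_i), where ⊞_{i∈I} is the n-ary limit operation F_I. -/
/-!
Multiplying by `α ≠ 0` sends each signed count `ξ_I[x](β)` to `ξ_I[αx](αβ)`, so the residual
set `J_I` does not move. For `α > 0` the maximal modulus, the maximum and the minimum over `J_I`
all scale by `α`; negation keeps the maximal modulus but flips the sign of `ξ` there and swaps
maximum with minimum. Every `α` is a positive multiple of `±1` or zero, and for `α = 0` all
counts vanish, so both sides are `0`.
-/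

open scoped Classical

/-- ξ_I[x](α): signed count of occurrences of α among the x i, i ∈ I. -/
noncomputable def xiF {ι : Type*} (I : Finset ι) (x : ι → ℝ) (α : ℝ) : ℤ :=
  ((I.filter fun i => x i = α).card : ℤ) - ((I.filter fun i => x i = -α).card : ℤ)

/-- the n-ary limit operation F_I, i.e. ⊞_{i∈I} x_i. -/
noncomputable def FF {ι : Type*} (I : Finset ι) (x : ι → ℝ) : ℝ :=
  if h : (I.filter fun j => xiF I x (x j) ≠ 0).Nonempty then
    if 0 < xiF I x ((I.filter fun j => xiF I x (x j) ≠ 0).sup' h fun i => |x i|) then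
      (I.filter fun j => xiF I x (x j) ≠ 0).sup' h x
    else if xiF I x ((I.filter fun j => xiF I x (x j) ≠ 0).sup' h fun i => |x i|) < 0 then
      (I.filter fun j => xiF I x (x j) ≠ 0).inf' h x
    else 0
  else 0

lemma Finset.sup'_neg_eq_neg_inf' {ι : Type*} {J : Finset ι} (h : J.Nonempty) (x : ι → ℝ) :
    J.sup' h (fun i => -x i) = -J.inf' h x := by
  apply le_antisymm
  · exact Finset.sup'_le _ _ fun i hi => neg_le_neg (Finset.inf'_le x hi)
  · obtain ⟨i, hi, hix⟩ := Finset.exists_mem_eq_inf' h x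
    rw [hix]
    exact Finset.le_sup' (fun i => -x i) hi

lemma Finset.inf'_neg_eq_neg_sup' {ι : Type*} {J : Finset ι} (h : J.Nonempty) (x : ι → ℝ) :
    J.inf' h (fun i => -x i) = -J.sup' h x := by
  rw [← neg_neg (J.inf' h _), ← Finset.sup'_neg_eq_neg_inf']
  simp only [neg_neg]

lemma Finset.inf'_mul_of_nonneg {ι : Type*} {J : Finset ι} (h : J.Nonempty) (x : ι → ℝ) {c : ℝ}
    (hc : 0 ≤ c) : J.inf' h (fun i => c * x i) = c * J.inf' h x :=
  (Finset.apply_inf'_eq_inf'_comp h (c * ·) fun a b => mul_min_of_nonneg a b hc).symm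

section xiF

variable {ι : Type*} (I : Finset ι) (x : ι → ℝ)

lemma xiF_neg (β : ℝ) : xiF I x (-β) = -xiF I x β := by
  rw [xiF, xiF, neg_neg, neg_sub]

lemma xiF_mul_mul {c : ℝ} (hc : c ≠ 0) (β : ℝ) :
    xiF I (fun i => c * x i) (c * β) = xiF I x β := by
  simp only [xiF, ← mul_neg, mul_right_inj' hc]

lemma xiF_neg_neg (β : ℝ) : xiF I (fun i => -x i) (-β) = xiF I x β := by
  simpa using xiF_mul_mul I x (by norm_num : (-1 : ℝ) ≠ 0) β

lemma xiF_neg_fun (β : ℝ) : xiF I (fun i => -x i) β = -xiF I x β := by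
  rw [← neg_neg β, xiF_neg_neg, xiF_neg, neg_neg]

end xiF

namespace FF

variable {ι : Type*} (I : Finset ι) (x : ι → ℝ)

/-- The residual index set `J_I(x)`. -/
noncomputable def residual : Finset ι := I.filter fun j => xiF I x (x j) ≠ 0

lemma eq_dite : FF I x =
    if h : (residual I x).Nonempty then
      if 0 < xiF I x ((residual I x).sup' h fun i => |x i|) then (residual I x).sup' h x
      else if xiF I x ((residual I x).sup' h fun i => |x i|) < 0 then (residual I x).inf' h x
      else 0
    else 0 := rfl

lemma residual_mul {c : ℝ} (hc : c ≠ 0) : residual I (fun i => c * x i) = residual I x := by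
  simp only [residual, xiF_mul_mul I x hc]

lemma residual_neg : residual I (fun i => -x i) = residual I x := by
  simp only [residual, xiF_neg_neg]

lemma residual_const_zero : residual I (fun _ => (0 : ℝ)) = ∅ := by
  simp [residual, xiF]

lemma const_zero : FF I (fun _ => 0) = 0 := by
  rw [eq_dite, residual_const_zero]
  simp

lemma mul_of_pos {c : ℝ} (hc : 0 < c) : FF I (fun i => c * x i) = c * FF I x := by
  rw [eq_dite, eq_dite, residual_mul I x hc.ne']
  simp only [abs_mul, abs_of_pos hc, ← Finset.mul₀_sup' hc.le, xiF_mul_mul I x hc.ne',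
    Finset.inf'_mul_of_nonneg _ _ hc.le]
  split_ifs <;> simp

lemma neg : FF I (fun i => -x i) = -FF I x := by
  rw [eq_dite, eq_dite, residual_neg]
  by_cases h : (residual I x).Nonempty
  · -- rewriting under `sup'` with `simp` would replace `h` by a different proof term,
    -- hiding from `omega` that the two conditions below mention the same number
    have abs_neg_fun : (fun i => |-x i|) = fun i => |x i| := funext fun i => abs_neg (x i)
    rw [dif_pos h, dif_pos h, abs_neg_fun]
    simp only [xiF_neg_fun, Finset.sup'_neg_eq_neg_inf', Finset.inf'_neg_eq_neg_sup']
    split_ifs <;> first | omega | simp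
  · simp only [dif_neg h, neg_zero]

end FF

theorem stmt_6 {n : ℕ} (x : Fin n → ℝ) (I : Finset (Fin n)) (α : ℝ) :
    α * FF I x = FF I (fun i => α * x i) := by
  rcases lt_trichotomy α 0 with hα | rfl | hα
  · have hneg : (fun i => α * x i) = fun i => -((-α) * x i) := funext fun i => by ring
    rw [hneg, FF.neg, FF.mul_of_pos I x (neg_pos.2 hα)]
    ring
  · simp only [zero_mul, FF.const_zero]
  · exact (FF.mul_of_pos I x hα).symm
end

section
/- For any n×n real matrix A and any permutation σ of [n], the limit determinant of the matrix whose columns are a^{σ(1)},…,a^{σ(n)} equals sgn(σ)·|A|_∞, where |A|_∞ = ⊞_{π∈S_n} sgn(π) Π_i a_{i,π(i)}. Moreover, multiplying one column of A by a scalar α multiplies |A|_∞ by α. -/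
open scoped Classical

/-- determinant in limit -/
noncomputable def detInf {n : ℕ} (A : Matrix (Fin n) (Fin n) ℝ) : ℝ :=
  FF Finset.univ fun σ : Equiv.Perm (Fin n) =>
    ((Equiv.Perm.sign σ : ℤ) : ℝ) * ∏ i, A i (σ i)

/-!
`FF` sees a family only through its values: the support of non-cancelling terms, the counts
`xiF` and the extremal surviving terms are unchanged by reindexing along a bijection, and they
transform equivariantly under negation and under odd strictly increasing maps such as `t ↦ c * t`
with `c > 0`; hence `FF` is invariant under reindexing and homogeneous of degree one.
Permuting the columns of `A` by `σ` turns the term of `π` into `sign σ` times the term of `σ * π`,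
and scaling column `k` by `α` scales every term by `α`.
-/

open Finset Function

namespace Finset

variable {ι α : Type*} [AddCommGroup α] [LinearOrder α] [IsOrderedAddMonoid α]

theorem sup'_neg_eq_neg_inf'_s14 (s : Finset ι) (hs : s.Nonempty) (f : ι → α) :
    s.sup' hs (fun i => -f i) = -s.inf' hs f :=
  (map_finset_inf' (OrderIso.neg α) hs f).symm

theorem inf'_neg_eq_neg_sup'_s14 (s : Finset ι) (hs : s.Nonempty) (f : ι → α) :
    s.inf' hs (fun i => -f i) = -s.sup' hs f :=
  (map_finset_sup' (OrderIso.neg α) hs f).symm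

end Finset

section LimitOperation

variable {ι κ : Type*}

lemma xiF_comp_of_injective {g : ℝ → ℝ} (hg : Injective g) (hodd : ∀ t, g (-t) = -g t)
    (I : Finset ι) (x : ι → ℝ) (α : ℝ) : xiF I (fun i => g (x i)) (g α) = xiF I x α := by
  simp only [xiF, ← hodd, hg.eq_iff]

lemma filter_xiF_comp_ne_zero {g : ℝ → ℝ} (hg : Injective g) (hodd : ∀ t, g (-t) = -g t)
    (I : Finset ι) (x : ι → ℝ) :
    I.filter (fun j => xiF I (fun i => g (x i)) (g (x j)) ≠ 0) =
      I.filter (fun j => xiF I x (x j) ≠ 0) := by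
  simp only [xiF_comp_of_injective hg hodd]

lemma xiF_map (s : Finset κ) (f : κ ↪ ι) (x : ι → ℝ) (α : ℝ) :
    xiF (s.map f) x α = xiF s (x ∘ f) α := by
  simp only [xiF, filter_map, card_map, comp_apply]

lemma FF_map (s : Finset κ) (f : κ ↪ ι) (x : ι → ℝ) : FF (s.map f) x = FF s (x ∘ f) := by
  have hsupp : (s.map f).filter (fun j => xiF (s.map f) x (x j) ≠ 0) =
      (s.filter fun j => xiF s (x ∘ f) ((x ∘ f) j) ≠ 0).map f := by
    simp only [filter_map, xiF_map, comp_apply]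
  unfold FF
  -- the support appears in the types of the `sup'` proofs, so it is generalized, not rewritten
  generalize (s.map f).filter (fun j => xiF (s.map f) x (x j) ≠ 0) = S at hsupp ⊢
  subst hsupp
  simp only [map_nonempty, sup'_map, inf'_map, xiF_map, comp_def]

lemma FF_comp_equiv [Fintype ι] [Fintype κ] (e : κ ≃ ι) (x : ι → ℝ) :
    FF univ (x ∘ e) = FF univ x := by
  rw [← map_univ_equiv e, FF_map]
  rfl

lemma xiF_neg_s14 (I : Finset ι) (x : ι → ℝ) (α : ℝ) :
    xiF I (fun i => -x i) α = -xiF I x α := by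
  simp only [xiF, neg_eq_iff_eq_neg, neg_neg, neg_sub]

lemma FF_neg (I : Finset ι) (x : ι → ℝ) : FF I (fun i => -x i) = -FF I x := by
  have hsupp := filter_xiF_comp_ne_zero (g := Neg.neg) neg_injective (fun _ => rfl) I x
  unfold FF
  generalize I.filter (fun j => xiF I (fun i => -x i) (-x j) ≠ 0) = S at hsupp ⊢
  subst hsupp
  set S := I.filter fun j => xiF I x (x j) ≠ 0
  by_cases h : S.Nonempty
  · simp only [dif_pos h, abs_neg, xiF_neg_s14, sup'_neg_eq_neg_inf'_s14, inf'_neg_eq_neg_sup'_s14]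
    split_ifs <;> first | omega | simp
  · simp only [dif_neg h, neg_zero]

lemma FF_comp_of_strictMono {g : ℝ → ℝ} (hg : StrictMono g) (hodd : ∀ t, g (-t) = -g t)
    (I : Finset ι) (x : ι → ℝ) : FF I (fun i => g (x i)) = g (FF I x) := by
  have hg0 : g 0 = 0 := self_eq_neg.mp (by simpa using hodd 0)
  have habs (t : ℝ) : |g t| = g |t| := by
    rcases le_total 0 t with ht | ht
    · rw [abs_of_nonneg ht, abs_of_nonneg (hg0 ▸ hg.monotone ht)]
    · rw [abs_of_nonpos ht, abs_of_nonpos (hg0 ▸ hg.monotone ht), hodd]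
  have hsupp := filter_xiF_comp_ne_zero hg.injective hodd I x
  unfold FF
  generalize I.filter (fun j => xiF I (fun i => g (x i)) (g (x j)) ≠ 0) = S at hsupp ⊢
  subst hsupp
  set S := I.filter fun j => xiF I x (x j) ≠ 0
  by_cases h : S.Nonempty
  · have hsup (f : ι → ℝ) : (S.sup' h fun i => g (f i)) = g (S.sup' h f) :=
      (apply_sup'_eq_sup'_comp h g fun _ _ => hg.monotone.map_max).symm
    have hinf (f : ι → ℝ) : (S.inf' h fun i => g (f i)) = g (S.inf' h f) :=
      (apply_inf'_eq_inf'_comp h g fun _ _ => hg.monotone.map_min).symm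
    simp only [dif_pos h, habs, hsup, hinf, xiF_comp_of_injective hg.injective hodd]
    split_ifs <;> simp [hg0]
  · simp only [dif_neg h, hg0]

lemma FF_mul (I : Finset ι) (x : ι → ℝ) (c : ℝ) : FF I (fun i => c * x i) = c * FF I x := by
  have hpos {c : ℝ} (hc : 0 < c) : FF I (fun i => c * x i) = c * FF I x :=
    FF_comp_of_strictMono (strictMono_mul_left_of_pos hc) (mul_neg c) I x
  rcases lt_trichotomy c 0 with hc | rfl | hc
  · calc FF I (fun i => c * x i) = FF I (fun i => -(-c * x i)) := by simp only [neg_mul, neg_neg]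
      _ = c * FF I x := by rw [FF_neg, hpos (neg_pos.2 hc), neg_mul, neg_neg]
  · simpa [self_eq_neg] using FF_neg I fun _ => (0 : ℝ)
  · exact hpos hc

end LimitOperation

open Equiv.Perm in
lemma detInf_permute' {n : ℕ} (A : Matrix (Fin n) (Fin n) ℝ) (σ : Equiv.Perm (Fin n)) :
    detInf (Matrix.of fun i j => A i (σ j)) = ((sign σ : ℤ) : ℝ) * detInf A := by
  have hsign : ((sign σ : ℤ) : ℝ) * (sign σ : ℤ) = 1 := by
    rw [← Int.cast_mul, ← Units.val_mul, Int.units_mul_self, Units.val_one, Int.cast_one]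
  have hterm (π : Equiv.Perm (Fin n)) : ((sign π : ℤ) : ℝ) * ∏ i, A i (σ (π i)) =
      (sign σ : ℤ) * (((sign (σ * π) : ℤ) : ℝ) * ∏ i, A i ((σ * π) i)) := by
    simp only [mul_apply, Equiv.Perm.sign_mul, Units.val_mul, Int.cast_mul]
    linear_combination -((sign π : ℤ) : ℝ) * (∏ i, A i (σ (π i))) * hsign
  unfold detInf
  simp only [Matrix.of_apply, hterm]
  rw [FF_mul]
  exact congrArg _ (FF_comp_equiv (Equiv.mulLeft σ)
    fun τ : Equiv.Perm (Fin n) => ((sign τ : ℤ) : ℝ) * ∏ i, A i (τ i))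

lemma detInf_mul_col {n : ℕ} (A : Matrix (Fin n) (Fin n) ℝ) (α : ℝ) (k : Fin n) :
    detInf (Matrix.of fun i j => if j = k then α * A i j else A i j) = α * detInf A := by
  have hprod (π : Equiv.Perm (Fin n)) :
      ∏ i, (if π i = k then α * A i (π i) else A i (π i)) = α * ∏ i, A i (π i) := by
    calc ∏ i, (if π i = k then α * A i (π i) else A i (π i))
        = ∏ i, (if π i = k then α else 1) * A i (π i) := by
          refine prod_congr rfl fun i _ => ?_
          split_ifs <;> ring
      _ = (∏ j, if j = k then α else 1) * ∏ i, A i (π i) := by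
          rw [prod_mul_distrib, Equiv.prod_comp π fun j => if j = k then α else 1]
      _ = α * ∏ i, A i (π i) := by simp
  unfold detInf
  simp only [Matrix.of_apply, hprod, mul_left_comm _ α]
  exact FF_mul _ _ α

theorem stmt_14 {n : ℕ} (A : Matrix (Fin n) (Fin n) ℝ) (σ : Equiv.Perm (Fin n))
    (α : ℝ) (k : Fin n) :
    detInf (Matrix.of fun i j => A i (σ j)) = ((Equiv.Perm.sign σ : ℤ) : ℝ) * detInf A ∧
    detInf (Matrix.of fun i j => if j = k then α * A i j else A i j) = α * detInf A :=
  ⟨detInf_permute' A σ, detInf_mul_col A α k⟩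
end

section
/- Let a ∈ ℝ^n and define f⁻(x) = a₁x₁ ⊻⁻ ⋯ ⊻⁻ aₙxₙ and f⁺(x) = a₁x₁ ⊻⁺ ⋯ ⊻⁺ aₙxₙ. Then {x : f⁻(x) ≤ 0} ∩ {x : f⁺(x) ≥ 0} = {x : f⁻(x) + f⁺(x) = 0}. -/
/-! Both regularizations pick the summand of largest modulus and differ only in how they break a
tie `|u| = |v|` (by `min` or by `max`). Hence, by induction along the fold, `f⁻(x)` and `f⁺(x)`
have the same modulus and `f⁻(x) ≤ f⁺(x)`. Two reals with `|m| = |p|` and `m ≤ p` satisfy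
`m ≤ 0 ≤ p` exactly when `p = -m`. -/

open scoped Classical

/-- lower B-form: a₁x₁ ⊻⁻ ⋯ ⊻⁻ aₙxₙ -/
noncomputable def lformM {n : ℕ} (a x : Fin n → ℝ) : ℝ :=
  (List.ofFn fun i => a i * x i).foldr smm 0

/-- upper B-form: a₁x₁ ⊻⁺ ⋯ ⊻⁺ aₙxₙ -/
noncomputable def lformP {n : ℕ} (a x : Fin n → ℝ) : ℝ :=
  (List.ofFn fun i => a i * x i).foldr smp 0

lemma abs_smm_eq_abs_smp_and_smm_le_smp (u : ℝ) {v w : ℝ} (habs : |v| = |w|) (hle : v ≤ w) :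
    |smm u v| = |smp u w| ∧ smm u v ≤ smp u w := by
  unfold smm smp
  rw [← habs]
  split_ifs with hvu huv
  · exact ⟨rfl, le_rfl⟩
  · exact ⟨habs, hle⟩
  · have htie : |v| = |u| := le_antisymm (not_lt.1 huv) (not_lt.1 hvu)
    refine ⟨?_, (min_le_left u v).trans (le_max_left u w)⟩
    rcases min_choice u v with hmin | hmin <;> rcases max_choice u w with hmax | hmax <;>
      simp only [hmin, hmax, ← habs, htie]

lemma abs_foldr_smm_eq_abs_foldr_smp_and_le (l : List ℝ) :
    |l.foldr smm 0| = |l.foldr smp 0| ∧ l.foldr smm 0 ≤ l.foldr smp 0 := by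
  induction l with
  | nil => simp
  | cons u t ih => exact abs_smm_eq_abs_smp_and_smm_le_smp u ih.1 ih.2

lemma nonpos_and_nonneg_iff_add_eq_zero {m p : ℝ} (habs : |m| = |p|) (hle : m ≤ p) :
    m ≤ 0 ∧ 0 ≤ p ↔ m + p = 0 := by
  constructor
  · rintro ⟨hm, hp⟩
    rw [abs_of_nonpos hm, abs_of_nonneg hp] at habs
    linarith
  · intro hsum
    constructor <;> linarith

theorem stmt_16 {n : ℕ} (a : Fin n → ℝ) :
    {x : Fin n → ℝ | lformM a x ≤ 0} ∩ {x : Fin n → ℝ | 0 ≤ lformP a x} =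
      {x : Fin n → ℝ | lformM a x + lformP a x = 0} := by
  ext x
  obtain ⟨habs, hle⟩ := abs_foldr_smm_eq_abs_foldr_smp_and_le (List.ofFn fun i => a i * x i)
  exact nonpos_and_nonneg_iff_add_eq_zero habs hle
end
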